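/- arXiv:2304.04064 — 3 statements merged into one kernel-verified Lean document; each statement's English description precedes it below -/
import Mathlib

section
/- In the polynomial ring ℂ[a, b, c, t₁, t₂] the following ideal identity holds: (a, t₁·b, t₁·t₂·c) = (a, t₁) ∩ (a, b, t₂) ∩ (a, b, c). -/
open MvPolynomial

private lemma set_eq1 :
    ({(X 0 : MvPolynomial (Fin 5) ℂ), X 3 * X 1, X 3 * X 4 * X 2} : Set _) =
      (fun s => monomial s (1:ℂ)) ''
        {Finsupp.single 0 1, Finsupp.single 3 1 + Finsupp.single 1 1,
          Finsupp.single 3 1 + Finsupp.single 4 1 + Finsupp.single 2 1} := by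
  simp [Set.image_insert_eq, X, monomial_mul]

private lemma set_eq2 :
    ({(X 0 : MvPolynomial (Fin 5) ℂ), X 3} : Set _) =
      (fun s => monomial s (1:ℂ)) '' {Finsupp.single 0 1, Finsupp.single 3 1} := by
  simp [Set.image_insert_eq, X]

private lemma set_eq3 :
    ({(X 0 : MvPolynomial (Fin 5) ℂ), X 1, X 4} : Set _) =
      (fun s => monomial s (1:ℂ)) ''
        {Finsupp.single 0 1, Finsupp.single 1 1, Finsupp.single 4 1} := by
  simp [Set.image_insert_eq, X]

private lemma set_eq4 :
    ({(X 0 : MvPolynomial (Fin 5) ℂ), X 1, X 2} : Set _) =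
      (fun s => monomial s (1:ℂ)) ''
        {Finsupp.single 0 1, Finsupp.single 1 1, Finsupp.single 2 1} := by
  simp [Set.image_insert_eq, X]

private lemma mem1 {d : Fin 5 →₀ ℕ} :
    (∃ si ∈ ({Finsupp.single 0 1, Finsupp.single 3 1 + Finsupp.single 1 1,
      Finsupp.single 3 1 + Finsupp.single 4 1 + Finsupp.single 2 1} : Set (Fin 5 →₀ ℕ)),
      si ≤ d) ↔
      (1 ≤ d 0 ∨ (1 ≤ d 3 ∧ 1 ≤ d 1) ∨ (1 ≤ d 3 ∧ 1 ≤ d 4 ∧ 1 ≤ d 2)) := by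
  simp only [Set.mem_insert_iff, Set.mem_singleton_iff, exists_eq_or_imp, exists_eq_left,
    Finsupp.le_def, Finsupp.add_apply, Finsupp.single_apply]
  constructor
  · rintro (h | h | h)
    · exact Or.inl (by simpa using h 0)
    · exact Or.inr (Or.inl ⟨by simpa using h 3, by simpa using h 1⟩)
    · exact Or.inr (Or.inr ⟨by simpa using h 3, by simpa using h 4, by simpa using h 2⟩)
  · rintro (h | h | h)
    · exact Or.inl fun i => by fin_cases i <;> simp <;> omega
    · exact Or.inr (Or.inl fun i => by fin_cases i <;> simp <;> omega)
    · exact Or.inr (Or.inr fun i => by fin_cases i <;> simp <;> omega)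

private lemma mem2 {d : Fin 5 →₀ ℕ} :
    (∃ si ∈ ({Finsupp.single 0 1, Finsupp.single 3 1} : Set (Fin 5 →₀ ℕ)), si ≤ d) ↔
      (1 ≤ d 0 ∨ 1 ≤ d 3) := by
  simp [Set.mem_insert_iff, exists_eq_or_imp, Finsupp.single_le_iff]

private lemma mem3 {d : Fin 5 →₀ ℕ} :
    (∃ si ∈ ({Finsupp.single 0 1, Finsupp.single 1 1, Finsupp.single 4 1} :
      Set (Fin 5 →₀ ℕ)), si ≤ d) ↔ (1 ≤ d 0 ∨ 1 ≤ d 1 ∨ 1 ≤ d 4) := by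
  simp [Set.mem_insert_iff, exists_eq_or_imp, Finsupp.single_le_iff]

private lemma mem4 {d : Fin 5 →₀ ℕ} :
    (∃ si ∈ ({Finsupp.single 0 1, Finsupp.single 1 1, Finsupp.single 2 1} :
      Set (Fin 5 →₀ ℕ)), si ≤ d) ↔ (1 ≤ d 0 ∨ 1 ≤ d 1 ∨ 1 ≤ d 2) := by
  simp [Set.mem_insert_iff, exists_eq_or_imp, Finsupp.single_le_iff]

/-- In ℂ[a,b,c,t₁,t₂] (with a = X 0, b = X 1, c = X 2, t₁ = X 3, t₂ = X 4):
(a, t₁·b, t₁·t₂·c) = (a, t₁) ∩ (a, b, t₂) ∩ (a, b, c). -/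
theorem stmt8 :
    (Ideal.span {(X 0 : MvPolynomial (Fin 5) ℂ), X 3 * X 1, X 3 * X 4 * X 2}) =
      Ideal.span {(X 0 : MvPolynomial (Fin 5) ℂ), X 3} ⊓
        Ideal.span {(X 0 : MvPolynomial (Fin 5) ℂ), X 1, X 4} ⊓
        Ideal.span {(X 0 : MvPolynomial (Fin 5) ℂ), X 1, X 2} := by
  ext p
  rw [set_eq1, set_eq2, set_eq3, set_eq4]
  simp only [Ideal.mem_inf, mem_ideal_span_monomial_image, mem1, mem2, mem3, mem4,
    ← forall_and]
  refine forall₂_congr fun d _ => ?_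
  omega
end

section
/- Let f ∈ ℂ(X) be a rational function over ℂ. There exists a rational function g ∈ ℂ(X) with derivative g' = f if and only if for every a ∈ ℂ the residue of f at a (i.e., the coefficient of (X − a)⁻¹ in the partial fraction / Laurent expansion of f at a) is zero. -/
open Polynomial

/-- The derivative of a rational function f = num/denom, given by the quotient rule. -/
noncomputable def ratDeriv (f : RatFunc ℂ) : RatFunc ℂ :=
  algebraMap (Polynomial ℂ) (RatFunc ℂ)
      (Polynomial.derivative f.num * f.denom - f.num * Polynomial.derivative f.denom) /
    algebraMap (Polynomial ℂ) (RatFunc ℂ) (f.denom ^ 2)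

/-- The residue of a rational function f at a point a ∈ ℂ: the coefficient of X⁻¹ in
the Laurent expansion of f at a (obtained by translating by a and expanding at 0). -/
noncomputable def ratResidue (a : ℂ) (f : RatFunc ℂ) : ℂ :=
  ((RatFunc.laurent a f : RatFunc ℂ) : LaurentSeries ℂ).coeff (-1)

/-! Over an algebraically closed field, splitting off the top-order pole at a root of the
denominator writes every rational function as a polynomial plus a sum of terms
`c / (X - b) ^ (n + 1)`. Polynomials and the terms with `n ≥ 1` are derivatives, so every `f` is
`g' + ∑ c_b / (X - b)`. The residue at `a` is additive and vanishes on the derivative of each of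
these building blocks, hence on every derivative, and it reads off `c_a` from the simple poles.
So `f` has a rational antiderivative iff all `c_b` vanish, iff all residues of `f` vanish. -/

theorem Polynomial.exists_derivative_eq {K : Type*} [Field K] [CharZero K] (p : K[X]) :
    ∃ q : K[X], derivative q = p := by
  induction p using Polynomial.induction_on' with
  | add p q hp hq =>
    obtain ⟨P, rfl⟩ := hp
    obtain ⟨Q, rfl⟩ := hq
    exact ⟨P + Q, derivative_add⟩
  | monomial n a =>
    refine ⟨C (a / (n + 1)) * X ^ (n + 1), ?_⟩
    rw [derivative_C_mul_X_pow, ← C_mul_X_pow_eq_monomial, Nat.add_sub_cancel]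
    congr 2
    push_cast
    field_simp

section PartialFractions

variable {K : Type*} [Field K]

open RatFunc (algebraMap_ne_zero)

local notation "A" => algebraMap K[X] (RatFunc K)

theorem exists_div_eq_C_div_X_sub_C_pow_add_div (p : K[X]) {q : K[X]} {b : K}
    (hq : q ≠ 0) (hb : q.IsRoot b) :
    ∃ (c : K) (n : ℕ) (p₁ q₁ : K[X]), q₁ ≠ 0 ∧ q₁.natDegree < q.natDegree ∧
      A p / A q = A (C c) / A ((X - C b) ^ (n + 1)) + A p₁ / A q₁ := by
  obtain ⟨r, hqr, hbr⟩ := q.exists_eq_pow_rootMultiplicity_mul_and_not_dvd hq b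
  obtain ⟨n, hn⟩ : ∃ n, q.rootMultiplicity b = n + 1 :=
    Nat.exists_eq_add_one.mpr ((rootMultiplicity_pos hq).mpr hb)
  rw [hn] at hqr
  have hrb : r.eval b ≠ 0 := fun h => hbr (dvd_iff_isRoot.mpr h)
  have hr : r ≠ 0 := fun h => hrb (by simp [h])
  have hXb : (X - C b : K[X]) ≠ 0 := X_sub_C_ne_zero b
  -- `c` is chosen so that `p - c r` vanishes at `b`, leaving a pole of lower order.
  set c := p.eval b / r.eval b
  obtain ⟨p₁, hp₁⟩ : X - C b ∣ p - C c * r := dvd_iff_isRoot.mpr (by simp [c, hrb])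
  refine ⟨c, n, p₁, (X - C b) ^ n * r, mul_ne_zero (pow_ne_zero _ hXb) hr, ?_, ?_⟩
  · rw [hqr, natDegree_mul (pow_ne_zero _ hXb) hr, natDegree_mul (pow_ne_zero _ hXb) hr,
      natDegree_pow, natDegree_pow, natDegree_X_sub_C]
    omega
  · rw [hqr, div_add_div _ _ (algebraMap_ne_zero (pow_ne_zero _ hXb))
      (algebraMap_ne_zero (mul_ne_zero (pow_ne_zero _ hXb) hr)),
      div_eq_div_iff (algebraMap_ne_zero (mul_ne_zero (pow_ne_zero _ hXb) hr))
      (mul_ne_zero (algebraMap_ne_zero (pow_ne_zero _ hXb))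
        (algebraMap_ne_zero (mul_ne_zero (pow_ne_zero _ hXb) hr)))]
    simp only [← map_mul, ← map_add]
    refine congrArg _ ?_
    linear_combination ((X - C b) ^ (n + 1) * ((X - C b) ^ n * r)) * hp₁

theorem induction_on_partialFractions [IsAlgClosed K] {P : RatFunc K → Prop}
    (add : ∀ f g, P f → P g → P (f + g)) (polynomial : ∀ p : K[X], P (A p))
    (pole : ∀ (c b : K) (n : ℕ), P (A (C c) / A ((X - C b) ^ (n + 1)))) (f : RatFunc K) :
    P f := by
  suffices h : ∀ (d : ℕ) (p q : K[X]), q ≠ 0 → q.natDegree = d → P (A p / A q) by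
    rw [← f.num_div_denom]
    exact h _ _ _ f.denom_ne_zero rfl
  intro d
  induction d using Nat.strong_induction_on with
  | _ d ih =>
    intro p q hq hd
    rcases Nat.eq_zero_or_pos d with rfl | hpos
    · obtain ⟨u, rfl⟩ : ∃ u, q = C u := ⟨_, eq_C_of_natDegree_eq_zero hd⟩
      have hu : u ≠ 0 := by rintro rfl; exact hq C_0
      convert polynomial (C u⁻¹ * p) using 1
      rw [div_eq_iff (algebraMap_ne_zero hq), ← map_mul]
      refine congrArg _ ?_
      rw [mul_comm, ← mul_assoc, ← C_mul, mul_inv_cancel₀ hu, C_1, one_mul]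
    · obtain ⟨b, hb⟩ :=
        IsAlgClosed.exists_root q (natDegree_pos_iff_degree_pos.mp (hd ▸ hpos)).ne'
      obtain ⟨c, n, p₁, q₁, hq₁, hlt, heq⟩ :=
        exists_div_eq_C_div_X_sub_C_pow_add_div p hq hb
      rw [heq]
      exact add _ _ (pole c b n) (ih _ (hd ▸ hlt) p₁ q₁ hq₁ rfl)

end PartialFractions

section ComplexRatFunc

open RatFunc (num_div_denom algebraMap_ne_zero algebraMap_injective)

local notation "A" => algebraMap ℂ[X] (RatFunc ℂ)

theorem ratDeriv_div (p : ℂ[X]) {q : ℂ[X]} (hq : q ≠ 0) :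
    ratDeriv (A p / A q) = A (derivative p * q - p * derivative q) / A (q ^ 2) := by
  set f := A p / A q
  have hf : f.denom ≠ 0 := f.denom_ne_zero
  have hcross : f.num * q = p * f.denom := by
    have h := num_div_denom f
    rw [div_eq_div_iff (algebraMap_ne_zero hf) (algebraMap_ne_zero hq), ← map_mul,
      ← map_mul] at h
    exact algebraMap_injective ℂ h
  have hcross' := congrArg derivative hcross
  rw [derivative_mul, derivative_mul] at hcross'
  rw [ratDeriv, div_eq_div_iff (algebraMap_ne_zero (pow_ne_zero 2 hf))
      (algebraMap_ne_zero (pow_ne_zero 2 hq)), ← map_mul, ← map_mul]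
  refine congrArg _ ?_
  linear_combination
    (f.denom * q) * hcross' - (derivative f.denom * q + f.denom * derivative q) * hcross

theorem ratDeriv_algebraMap (p : ℂ[X]) : ratDeriv (A p) = A (derivative p) := by
  simpa using ratDeriv_div p one_ne_zero

theorem ratDeriv_add (f g : RatFunc ℂ) : ratDeriv (f + g) = ratDeriv f + ratDeriv g := by
  have hf : A f.denom ≠ 0 := algebraMap_ne_zero f.denom_ne_zero
  have hg : A g.denom ≠ 0 := algebraMap_ne_zero g.denom_ne_zero
  have hsum : f + g = A (f.num * g.denom + f.denom * g.num) / A (f.denom * g.denom) := by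
    rw [map_add, map_mul, map_mul, map_mul, ← div_add_div _ _ hf hg, num_div_denom,
      num_div_denom]
  conv_rhs => rw [← num_div_denom f, ← num_div_denom g]
  rw [hsum, ratDeriv_div _ (mul_ne_zero f.denom_ne_zero g.denom_ne_zero),
    ratDeriv_div _ f.denom_ne_zero, ratDeriv_div _ g.denom_ne_zero]
  simp only [derivative_mul, map_add, map_sub, map_mul, map_pow]
  field_simp
  ring

theorem ratDeriv_C_div_X_sub_C_pow (c b : ℂ) (n : ℕ) :
    ratDeriv (A (C c) / A ((X - C b) ^ (n + 1))) =
      A (C (-(n + 1) * c)) / A ((X - C b) ^ (n + 2)) := by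
  have hXb : (X - C b : ℂ[X]) ≠ 0 := X_sub_C_ne_zero b
  rw [ratDeriv_div _ (pow_ne_zero _ hXb), div_eq_div_iff
      (algebraMap_ne_zero (pow_ne_zero _ (pow_ne_zero _ hXb)))
      (algebraMap_ne_zero (pow_ne_zero _ hXb)), ← map_mul, ← map_mul]
  refine congrArg _ ?_
  rw [derivative_C, derivative_pow, derivative_X_sub_C, Nat.add_sub_cancel]
  simp only [map_mul, map_neg, map_add, map_natCast, map_one]
  push_cast
  ring

theorem ratResidue_add (a : ℂ) (f g : RatFunc ℂ) :
    ratResidue a (f + g) = ratResidue a f + ratResidue a g := by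
  simp only [ratResidue, map_add, HahnSeries.coeff_add]

theorem ratResidue_div (a : ℂ) (p q : ℂ[X]) :
    ratResidue a (A p / A q) =
      (((taylor a p : PowerSeries ℂ) : LaurentSeries ℂ) /
        ((taylor a q : PowerSeries ℂ) : LaurentSeries ℂ)).coeff (-1) := by
  rw [ratResidue, RatFunc.laurent_div, map_div₀, ← RatFunc.coePolynomial_eq_algebraMap,
    ← RatFunc.coePolynomial_eq_algebraMap, ← RatFunc.coe_coe, ← RatFunc.coe_coe]

theorem ratResidue_div_of_eval_ne_zero {a : ℂ} (p : ℂ[X]) {q : ℂ[X]} (hq : q.eval a ≠ 0) :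
    ratResidue a (A p / A q) = 0 := by
  set P : PowerSeries ℂ := ↑(taylor a p)
  set Q : PowerSeries ℂ := ↑(taylor a q)
  have hQ : PowerSeries.constantCoeff Q ≠ 0 := by
    simpa [Q, ← PowerSeries.coeff_zero_eq_constantCoeff_apply, taylor_coeff_zero] using hq
  have hQ' : (Q : LaurentSeries ℂ) ≠ 0 :=
    (map_ne_zero_iff _ HahnSeries.ofPowerSeries_injective).mpr fun h => hQ (by simp [h])
  -- `Q` is a unit in `ℂ⟦X⟧`, so `P / Q` is a power series and has no polar part.
  have hdiv : (P / Q : LaurentSeries ℂ) =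
      ((P * Q⁻¹ : PowerSeries ℂ) : LaurentSeries ℂ) := by
    rw [div_eq_iff hQ', ← PowerSeries.coe_mul, mul_assoc, PowerSeries.inv_mul_cancel _ hQ,
      mul_one]
  rw [ratResidue_div, hdiv, PowerSeries.coeff_coe, if_pos (by norm_num)]

theorem ratResidue_div_X_sub_C_pow (a : ℂ) (p : ℂ[X]) (n : ℕ) :
    ratResidue a (A p / A ((X - C a) ^ (n + 1))) = (taylor a p).coeff n := by
  set P : LaurentSeries ℂ := ((taylor a p : PowerSeries ℂ) : LaurentSeries ℂ)
  have hpow : (((taylor a ((X - C a) ^ (n + 1)) : PowerSeries ℂ)) : LaurentSeries ℂ) =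
      HahnSeries.single ((n : ℤ) + 1) 1 := by
    simp [taylor_pow, HahnSeries.single_pow]
  have hdiv :
      P / HahnSeries.single ((n : ℤ) + 1) 1 = P * HahnSeries.single (-((n : ℤ) + 1)) 1 := by
    rw [div_eq_iff (HahnSeries.single_ne_zero one_ne_zero), mul_assoc,
      HahnSeries.single_mul_single, neg_add_cancel, one_mul, HahnSeries.single_zero_one, mul_one]
  rw [ratResidue_div, hpow, hdiv, show (-1 : ℤ) = n + -((n : ℤ) + 1) by ring,
    HahnSeries.coeff_mul_single_add, PowerSeries.coeff_coe]
  simp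

theorem ratResidue_C_div_X_sub_C_pow (a b c : ℂ) (n : ℕ) :
    ratResidue a (A (C c) / A ((X - C b) ^ (n + 1))) = if n = 0 ∧ b = a then c else 0 := by
  rcases eq_or_ne b a with rfl | hba
  · rw [ratResidue_div_X_sub_C_pow, taylor_C, coeff_C]
    simp
  · rw [ratResidue_div_of_eval_ne_zero, if_neg (by tauto)]
    simpa [sub_eq_zero] using hba.symm

theorem ratResidue_ratDeriv (a : ℂ) (g : RatFunc ℂ) : ratResidue a (ratDeriv g) = 0 := by
  induction g using induction_on_partialFractions with
  | add f g hf hg => rw [ratDeriv_add, ratResidue_add, hf, hg, add_zero]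
  | polynomial p =>
    rw [ratDeriv_algebraMap, ← div_one (A _), ← map_one (algebraMap ℂ[X] (RatFunc ℂ)),
      ratResidue_div_of_eval_ne_zero _ (by simp)]
  | pole c b n =>
    rw [ratDeriv_C_div_X_sub_C_pow, ratResidue_C_div_X_sub_C_pow, if_neg (by simp)]

noncomputable def simplePoles : (ℂ →₀ ℂ) →ₗ[ℂ] RatFunc ℂ :=
  Finsupp.linearCombination ℂ fun b => (A (X - C b))⁻¹

theorem simplePoles_single (b c : ℂ) :
    simplePoles (Finsupp.single b c) = A (C c) / A (X - C b) := by
  rw [simplePoles, Finsupp.linearCombination_single, Algebra.smul_def, div_eq_mul_inv,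
    RatFunc.algebraMap_C]
  rfl

theorem ratResidue_simplePoles (a : ℂ) (c : ℂ →₀ ℂ) :
    ratResidue a (simplePoles c) = c a := by
  induction c using Finsupp.induction_linear with
  | zero => simp [ratResidue]
  | add c₁ c₂ h₁ h₂ => rw [map_add, ratResidue_add, h₁, h₂, Finsupp.add_apply]
  | single b c =>
    rw [simplePoles_single, Finsupp.single_apply]
    simpa using ratResidue_C_div_X_sub_C_pow a b c 0

theorem exists_eq_ratDeriv_add_simplePoles (f : RatFunc ℂ) :
    ∃ (g : RatFunc ℂ) (c : ℂ →₀ ℂ), f = ratDeriv g + simplePoles c := by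
  induction f using induction_on_partialFractions with
  | add f₁ f₂ h₁ h₂ =>
    obtain ⟨g₁, c₁, rfl⟩ := h₁
    obtain ⟨g₂, c₂, rfl⟩ := h₂
    exact ⟨g₁ + g₂, c₁ + c₂, by rw [ratDeriv_add, map_add]; abel⟩
  | polynomial p =>
    obtain ⟨q, rfl⟩ := p.exists_derivative_eq
    exact ⟨A q, 0, by rw [ratDeriv_algebraMap, map_zero, add_zero]⟩
  | pole c b n =>
    cases n with
    | zero => exact ⟨0, Finsupp.single b c, by simp [ratDeriv, simplePoles_single]⟩
    | succ n =>
      refine ⟨A (C (-c / (n + 1))) / A ((X - C b) ^ (n + 1)), 0, ?_⟩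
      rw [ratDeriv_C_div_X_sub_C_pow, map_zero, add_zero]
      congr
      field_simp

end ComplexRatFunc

/-- A rational function over ℂ has a rational antiderivative if and only if all of
its residues vanish. -/
theorem stmt9 (f : RatFunc ℂ) :
    (∃ g : RatFunc ℂ, ratDeriv g = f) ↔ ∀ a : ℂ, ratResidue a f = 0 := by
  constructor
  · rintro ⟨g, rfl⟩ a
    exact ratResidue_ratDeriv a g
  · intro h
    obtain ⟨g, c, rfl⟩ := exists_eq_ratDeriv_add_simplePoles f
    have hc : c = 0 := Finsupp.ext fun a => by
      simpa [ratResidue_add, ratResidue_ratDeriv, ratResidue_simplePoles] using h a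
    exact ⟨g, by rw [hc, map_zero, add_zero]⟩
end

section
/- Let (R, 𝔪) be a Noetherian local ring and let I ⊆ R be an ideal generated by a regular sequence x₁, …, xₙ. If f₁, …, fₙ ∈ I are elements whose images in I/𝔪I form a generating set (equivalently, a basis of the κ-vector space I/𝔪I), then f₁, …, fₙ generate I and form a regular sequence. -/
/-!
By Nakayama the `fᵢ` generate `I`, so it suffices to show that `n` elements generating the same
ideal as a regular sequence of length `n` are again regular; we induct on `n`, over all Noetherian
local rings and Noetherian modules at once. By Nakayama again some `f` in the new list lies
outside `𝔪 I`, so when `f` is written in terms of the old sequence some coefficient, say that of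
`g`, is a unit. Then `f ≡ u g` modulo the other old elements, and since regular sequences may be
permuted in a Noetherian local ring, `g` may be replaced by `f` in the old sequence. Both lists
now start with `f` and generate the same ideal, so the induction hypothesis applies over `R ⧸ (f)`
to the module `M ⧸ f M`.
-/

open RingTheory.Sequence IsLocalRing Submodule

section

variable {R M : Type*} [CommRing R] [AddCommGroup M] [Module R M]

theorem Ideal.span_singleton_sup_eq_of_sub_unit_mul_mem {I : Ideal R} {f g : R} (u : Rˣ)
    (h : f - u * g ∈ I) : Ideal.span {f} ⊔ I = Ideal.span {g} ⊔ I := by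
  have hf : f ∈ Ideal.span {g} ⊔ I := Ideal.mem_span_singleton_sup.mpr ⟨u, _, h, by ring⟩
  have hg : g ∈ Ideal.span {f} ⊔ I :=
    Ideal.mem_span_singleton_sup.mpr ⟨↑u⁻¹, _, I.mul_mem_left (-↑u⁻¹ : R) h, by
      rw [mul_sub, ← mul_assoc]; simp⟩
  exact le_antisymm (sup_le ((Ideal.span_singleton_le_iff_mem _).mpr hf) le_sup_right)
    (sup_le ((Ideal.span_singleton_le_iff_mem _).mpr hg) le_sup_right)

theorem isSMulRegular_quotient_of_sub_unit_mul_mem {I : Ideal R} {f g : R} (u : Rˣ)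
    (h : f - u * g ∈ I) (hg : IsSMulRegular (M ⧸ I • (⊤ : Submodule R M)) g) :
    IsSMulRegular (M ⧸ I • (⊤ : Submodule R M)) f := by
  have hsmul : (f • · : M ⧸ I • (⊤ : Submodule R M) → _) = ((u * g : R) • ·) := by
    funext q
    obtain ⟨m, rfl⟩ := Submodule.Quotient.mk_surjective _ q
    rw [← Submodule.Quotient.mk_smul, ← Submodule.Quotient.mk_smul, Submodule.Quotient.eq,
      ← sub_smul]
    exact Submodule.smul_mem_smul h mem_top
  change Function.Injective _
  rw [hsmul]
  exact (Units.isSMulRegular _ u).mul hg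

theorem RingTheory.Sequence.IsWeaklyRegular.append_singleton_of_sub_unit_mul_mem {rs : List R}
    {f g : R} (u : Rˣ) (h : f - u * g ∈ Ideal.ofList rs)
    (hg : IsWeaklyRegular M (rs ++ [g])) :
    IsWeaklyRegular M (rs ++ [f]) := by
  rw [isWeaklyRegular_append_iff, isWeaklyRegular_singleton_iff] at hg ⊢
  exact ⟨hg.1, isSMulRegular_quotient_of_sub_unit_mul_mem u h hg.2⟩

theorem IsLocalRing.isRegular_cons_of_sub_unit_mul_mem [IsLocalRing R] [IsNoetherian R M]
    {rs : List R} {f g : R} (u : Rˣ) (h : f - u * g ∈ Ideal.ofList rs)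
    (hg : IsRegular M (g :: rs)) : IsRegular M (f :: rs) := by
  have hg' : IsRegular M (rs ++ [g]) :=
    isRegular_of_perm hg (List.perm_append_singleton g rs).symm
  refine isRegular_of_perm (?_ : IsRegular M (rs ++ [f])) (List.perm_append_singleton f rs)
  have hI : Ideal.ofList (rs ++ [f]) = Ideal.ofList (rs ++ [g]) := by
    simp only [Ideal.ofList_append, Ideal.ofList_singleton, sup_comm (Ideal.ofList rs)]
    exact Ideal.span_singleton_sup_eq_of_sub_unit_mul_mem u h
  rw [isRegular_iff] at hg' ⊢
  exact ⟨hg'.1.append_singleton_of_sub_unit_mul_mem u h, hI ▸ hg'.2⟩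

theorem IsLocalRing.exists_mem_notMem_maximalIdeal_smul_span {s : Set M} [IsLocalRing R]
    (hs : s.Finite) (hne : span R s ≠ ⊥) : ∃ m ∈ s, m ∉ maximalIdeal R • span R s := by
  by_contra! h
  exact hne (eq_bot_of_le_smul_of_le_jacobson_bot _ _ (fg_span hs) (span_le.mpr h)
    (maximalIdeal_le_jacobson ⊥))

theorem IsLocalRing.exists_sub_unit_smul_mem_span_diff [IsLocalRing R] {s : Set M} {m : M}
    (hm : m ∈ span R s) (hm' : m ∉ maximalIdeal R • span R s) :
    ∃ g ∈ s, ∃ u : Rˣ, m - u • g ∈ span R (s \ {g}) := by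
  classical
  obtain ⟨c, hcs, rfl⟩ := mem_span_set.mp hm
  obtain ⟨g, hg, hu⟩ : ∃ g ∈ c.support, IsUnit (c g) := by
    by_contra! h
    exact hm' (sum_mem fun g hg => smul_mem_smul ((mem_maximalIdeal _).mpr (h g hg))
      (subset_span (hcs hg)))
  refine ⟨g, hcs hg, hu.unit, ?_⟩
  rw [Finsupp.sum, ← Finset.sum_erase_add _ _ hg, Units.smul_def, IsUnit.unit_spec,
    add_sub_cancel_right]
  exact sum_mem fun b hb => smul_mem _ _ (subset_span
    ⟨hcs (Finset.mem_of_mem_erase hb), Finset.ne_of_mem_erase hb⟩)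

theorem Ideal.ofList_ofFn {n : ℕ} (v : Fin n → R) :
    Ideal.ofList (List.ofFn v) = Ideal.span (Set.range v) :=
  congrArg Ideal.span (Set.ext fun _ => List.mem_ofFn)

theorem Ideal.ofList_cons_erase [DecidableEq R] {r : R} {rs : List R} (h : r ∈ rs) :
    Ideal.ofList (r :: rs.erase r) = Ideal.ofList rs :=
  congrArg Ideal.span (Set.ext fun _ => (List.perm_cons_erase h).mem_iff.symm)

theorem Ideal.ofList_map_mk_span_singleton (f : R) (rs : List R) :
    Ideal.ofList (rs.map (Ideal.Quotient.mk (Ideal.span {f}))) =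
      (Ideal.ofList (f :: rs)).map (Ideal.Quotient.mk (Ideal.span {f})) := by
  rw [Ideal.ofList_cons, Ideal.map_sup, Ideal.map_quotient_self, bot_sup_eq, Ideal.map_ofList]

theorem RingTheory.Sequence.IsRegular.ofList_ne_bot {rs : List R} (h : IsRegular M rs)
    (hrs : rs ≠ []) : Ideal.ofList rs ≠ ⊥ := by
  obtain ⟨r, rs, rfl⟩ := List.exists_cons_of_ne_nil hrs
  have := h.nontrivial
  intro hbot
  have hr : r ∈ Ideal.ofList (r :: rs) := Ideal.subset_span List.mem_cons_self
  rw [hbot, Ideal.mem_bot] at hr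
  exact IsSMulRegular.not_zero (hr ▸ ((isRegular_cons_iff M r rs).mp h).1)

theorem IsLocalRing.isRegular_of_ofList_eq [IsLocalRing R] [IsNoetherian R M]
    {rs rs' : List R} (h : IsRegular M rs) (hlen : rs'.length = rs.length)
    (heq : Ideal.ofList rs' = Ideal.ofList rs) : IsRegular M rs' := by
  classical
  induction hn : rs.length generalizing R M rs rs' with
  | zero =>
    rw [List.length_eq_zero_iff.mp (hlen.trans hn)]
    have := h.nontrivial
    exact IsRegular.nil R M
  | succ n ih =>
    obtain ⟨f, hf, hfm⟩ := exists_mem_notMem_maximalIdeal_smul_span (List.finite_toSet rs')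
      (heq ▸ h.ofList_ne_bot (List.ne_nil_of_length_pos (by omega)))
    obtain ⟨g, hg, u, hfg⟩ := exists_sub_unit_smul_mem_span_diff
      (heq ▸ subset_span hf : f ∈ Ideal.ofList rs)
      (show f ∉ maximalIdeal R • Ideal.ofList rs from heq ▸ hfm)
    set L := rs.erase g
    set L' := rs'.erase f
    have hfg' : f - u * g ∈ Ideal.ofList L :=
      span_mono (fun r hr => (List.mem_erase_of_ne hr.2).mpr hr.1) hfg
    have hregL : IsRegular M (f :: L) :=
      isRegular_cons_of_sub_unit_mul_mem u hfg' (isRegular_of_perm h (List.perm_cons_erase hg))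
    have hL : Ideal.ofList (f :: L) = Ideal.ofList rs := by
      rw [Ideal.ofList_cons, Ideal.span_singleton_sup_eq_of_sub_unit_mul_mem u hfg',
        ← Ideal.ofList_cons, Ideal.ofList_cons_erase hg]
    obtain ⟨hf_reg, hquot⟩ := (isRegular_cons_iff' M f L).mp hregL
    have := hquot.nontrivial
    have := Module.nontrivial (R ⧸ Ideal.span {f}) (QuotSMulTop f M)
    have : IsLocalRing (R ⧸ Ideal.span {f}) := .of_surjective' _ Ideal.Quotient.mk_surjective
    have : IsNoetherian (R ⧸ Ideal.span {f}) (QuotSMulTop f M) :=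
      isNoetherian_of_tower R inferInstance
    refine isRegular_of_perm (IsRegular.cons' hf_reg (ih hquot ?_ ?_ ?_))
      (List.perm_cons_erase hf).symm
    · simp [L, List.length_erase_of_mem hf, List.length_erase_of_mem hg, hlen]
    · rw [Ideal.ofList_map_mk_span_singleton, Ideal.ofList_map_mk_span_singleton, hL, Ideal.ofList_cons_erase hf, heq]
    · simp [L, List.length_erase_of_mem hg, hn]

end

/-- In a Noetherian local ring (R, 𝔪), if the ideal I is generated by a regular sequence
x₁, …, xₙ and f₁, …, fₙ ∈ I generate I modulo 𝔪I, then f₁, …, fₙ generate I and form a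
regular sequence. -/
theorem stmt11 {R : Type*} [CommRing R] [IsNoetherianRing R] [IsLocalRing R]
    (n : ℕ) (x f : Fin n → R) (I : Ideal R)
    (hI : I = Ideal.span (Set.range x))
    (hxreg : IsRegular R (List.ofFn x))
    (hfI : ∀ i, f i ∈ I)
    (hgen : I ≤ Ideal.span (Set.range f) ⊔ IsLocalRing.maximalIdeal R * I) :
    Ideal.span (Set.range f) = I ∧ IsRegular R (List.ofFn f) := by
  have hspan : Ideal.span (Set.range f) = I :=
    le_antisymm (Ideal.span_le.mpr (Set.range_subset_iff.mpr hfI))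
      (le_of_le_smul_of_le_jacobson_bot (hI ▸ fg_span (Set.finite_range x))
        (maximalIdeal_le_jacobson ⊥) hgen)
  refine ⟨hspan, isRegular_of_ofList_eq hxreg (by simp) ?_⟩
  rw [Ideal.ofList_ofFn, Ideal.ofList_ofFn, hspan, hI]
end
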